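/- arXiv:2310.04934 — 6 statements merged into one kernel-verified Lean document; each statement's English description precedes it below -/
import Mathlib

section
/- For real numbers m, n ≥ 2 and variables Δ₁ ∈ [0,m], Δ₂ ∈ [0,n], the function f_d(Δ₁,Δ₂) = (1 - Δ₁/m - Δ₂/n) / √((m - Δ₁ + Δ₂)(n + Δ₁ - Δ₂)) has strictly negative partial derivative with respect to Δ₁ whenever 0 ≤ Δ₁ < m and 0 ≤ Δ₂ ≤ n and the denominator is positive. -/
/-!
Write `f = g / √h` with `g t = 1 - t/m - d₂/n` and `h t = (m - t + d₂)(n + t - d₂)`; then `f'` has the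
sign of `2 g' h - g h'`. In the nonnegative coordinates `a = m - d₁`, `b = n - d₂`, `c = d₁`, `d = d₂`
one has `m n g = a b - c d`, and `-m n (2 g' h - g h')` becomes a polynomial in `a, b, c, d` with
nonnegative coefficients which dominates `a (b + c) (b + d) = (m - d₁)(n + d₁ - d₂) n > 0`.
-/

open Real

theorem hasDerivAt_div_sqrt {g h : ℝ → ℝ} {g' h' x : ℝ} (hg : HasDerivAt g g' x)
    (hh : HasDerivAt h h' x) (hx : 0 < h x) :
    HasDerivAt (fun t => g t / √(h t)) ((2 * g' * h x - g x * h') / (2 * h x * √(h x))) x := by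
  have hs : 0 < √(h x) := sqrt_pos.2 hx
  refine (hg.div (hh.sqrt hx.ne') hs.ne').congr_deriv ?_
  field_simp
  rw [sq_sqrt hx.le]
  ring

theorem deriv_div_sqrt_neg {g h : ℝ → ℝ} {g' h' x : ℝ} (hg : HasDerivAt g g' x)
    (hh : HasDerivAt h h' x) (hx : 0 < h x) (hsign : 2 * g' * h x < g x * h') :
    deriv (fun t => g t / √(h t)) x < 0 := by
  rw [(hasDerivAt_div_sqrt hg hh hx).deriv]
  exact div_neg_of_neg_of_pos (by linarith) (by positivity)

theorem mul_add_mul_add_le {a b c d : ℝ} (ha : 0 ≤ a) (hb : 0 ≤ b) (hc : 0 ≤ c) (hd : 0 ≤ d) :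
    a * (b + c) * (b + d) ≤
      2 * (b + d) * ((a + d) * (b + c)) + (a * b - c * d) * ((a + d) - (b + c)) := by
  nlinarith [mul_nonneg (mul_nonneg ha ha) hb, mul_nonneg (mul_nonneg ha hb) hd,
    mul_nonneg (mul_nonneg hb hb) hd, mul_nonneg (mul_nonneg hb hc) hd,
    mul_nonneg (mul_nonneg hb hd) hd, mul_nonneg (mul_nonneg hc hd) hd,
    mul_nonneg (mul_nonneg hc hc) hd]

theorem stmt_0_general (m n d2 : ℝ) (hn : 2 ≤ n)
    (hd2 : 0 ≤ d2) (hd2n : d2 ≤ n) (d1 : ℝ) (hd1 : 0 ≤ d1) (hd1m : d1 < m)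
    (hpos : 0 < (m - d1 + d2) * (n + d1 - d2)) :
    deriv (fun t : ℝ => (1 - t / m - d2 / n) / Real.sqrt ((m - t + d2) * (n + t - d2))) d1
      < 0 := by
  have hm0 : 0 < m := hd1.trans_lt hd1m
  have hn0 : 0 < n := by linarith
  have hB : 0 < n + d1 - d2 := pos_of_mul_pos_right hpos (by linarith)
  have hg : HasDerivAt (fun t => 1 - t / m - d2 / n) (-(1 / m)) d1 := by
    simpa using (((hasDerivAt_id d1).div_const m).const_sub 1).sub_const (d2 / n)
  have hh : HasDerivAt (fun t => (m - t + d2) * (n + t - d2))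
      ((m - d1 + d2) - (n + d1 - d2)) d1 := by
    refine ((((hasDerivAt_id d1).const_sub m).add_const d2).mul
      (((hasDerivAt_id d1).const_add n).sub_const d2)).congr_deriv ?_
    simp only [id]
    ring
  refine deriv_div_sqrt_neg hg hh hpos ?_
  have hdom := mul_add_mul_add_le (sub_pos.2 hd1m).le (sub_nonneg.2 hd2n) hd1 hd2
  have hlow : 0 < (m - d1) * (n - d2 + d1) * (n - d2 + d2) :=
    mul_pos (mul_pos (sub_pos.2 hd1m) (by linarith)) (by linarith)
  rw [← sub_pos]
  calc 0 < _ / (m * n) := div_pos (hlow.trans_le hdom) (mul_pos hm0 hn0)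
    _ = _ := by field_simp; ring

theorem stmt_0 (m n d2 : ℝ) (hm : 2 ≤ m) (hn : 2 ≤ n)
    (hd2 : 0 ≤ d2) (hd2n : d2 ≤ n) (d1 : ℝ) (hd1 : 0 ≤ d1) (hd1m : d1 < m)
    (hpos : 0 < (m - d1 + d2) * (n + d1 - d2)) :
    deriv (fun t : ℝ => (1 - t / m - d2 / n) / Real.sqrt ((m - t + d2) * (n + t - d2))) d1
      < 0 :=
  stmt_0_general m n d2 hn hd2 hd2n d1 hd1 hd1m hpos
end

section
/- For m, n ≥ 2 and Δ₁ ∈ [0,m], Δ₂ ∈ [0,n] with both m - Δ₁ + Δ₂ > 0 and n + Δ₁ - Δ₂ > 0, the function f_d(Δ₁,Δ₂) = (1 - Δ₁/m - Δ₂/n)/√((m - Δ₁ + Δ₂)(n + Δ₁ - Δ₂)) attains its maximum value 1/√(mn) at (Δ₁,Δ₂) = (0,0) and its minimum value -1/√(mn) at (Δ₁,Δ₂) = (m,n). -/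
lemma key_ineq (m n a b : ℝ) (hm : 0 < m) (hn : 0 < n)
    (ha0 : 0 ≤ a) (ham : a ≤ m) (hb0 : 0 ≤ b) (hbn : b ≤ n) :
    (1 - a / m - b / n) ^ 2 * (m * n) ≤ (m - a + b) * (n + a - b) := by
  have h1 : (1 - a / m - b / n) = (m * n - a * n - b * m) / (m * n) := by
    field_simp
  have hpoly : (m * n - a * n - b * m) ^ 2 ≤ (m * n) * ((m - a + b) * (n + a - b)) := by
    have e1 : 0 ≤ (m + n) * (a * n * (m - a)) :=
      mul_nonneg (by linarith) (mul_nonneg (mul_nonneg ha0 hn.le) (by linarith))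
    have e2 : 0 ≤ (m + n) * (b * m * (n - b)) :=
      mul_nonneg (by linarith) (mul_nonneg (mul_nonneg hb0 hm.le) (by linarith))
    nlinarith [e1, e2]
  rw [h1, div_pow, div_mul_eq_mul_div]
  rw [div_le_iff₀ (by positivity)]
  calc (m * n - a * n - b * m) ^ 2 * (m * n)
      ≤ (m * n) * ((m - a + b) * (n + a - b)) * (m * n) := by
        apply mul_le_mul_of_nonneg_right hpoly (mul_pos hm hn).le
    _ = (m - a + b) * (n + a - b) * (m * n) ^ 2 := by ring

theorem stmt_1 (m n : ℝ) (hm : 2 ≤ m) (hn : 2 ≤ n) :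
    let f : ℝ × ℝ → ℝ := fun p =>
      (1 - p.1 / m - p.2 / n) / Real.sqrt ((m - p.1 + p.2) * (n + p.1 - p.2))
    let S : Set (ℝ × ℝ) := {p | 0 ≤ p.1 ∧ p.1 ≤ m ∧ 0 ≤ p.2 ∧ p.2 ≤ n ∧
      0 < (m - p.1 + p.2) * (n + p.1 - p.2)}
    f (0, 0) = 1 / Real.sqrt (m * n) ∧ f (m, n) = -(1 / Real.sqrt (m * n)) ∧
      IsMaxOn f S (0, 0) ∧ IsMinOn f S (m, n) := by
  intro f S
  have hm0 : (0:ℝ) < m := lt_of_lt_of_le two_pos hm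
  have hn0 : (0:ℝ) < n := lt_of_lt_of_le two_pos hn
  have hmn : (0:ℝ) < m * n := mul_pos hm0 hn0
  have hsmn : 0 < Real.sqrt (m * n) := Real.sqrt_pos.2 hmn
  have hf0 : f (0, 0) = 1 / Real.sqrt (m * n) := by
    simp only [f]
    norm_num
  have hfmn : f (m, n) = -(1 / Real.sqrt (m * n)) := by
    simp only [f]
    rw [div_self hm0.ne', div_self hn0.ne']
    have h : (m - m + n) * (n + m - n) = m * n := by ring
    rw [h]
    norm_num
    rw [neg_div, one_div]
  refine ⟨hf0, hfmn, ?_, ?_⟩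
  · intro p hp
    obtain ⟨h1, h2, h3, h4, hD⟩ := hp
    simp only [Set.mem_setOf_eq]
    rw [hf0]
    simp only [f]
    have hsD : 0 < Real.sqrt ((m - p.1 + p.2) * (n + p.1 - p.2)) := Real.sqrt_pos.2 hD
    rw [div_le_div_iff₀ hsD hsmn]
    set N := 1 - p.1 / m - p.2 / n with hN
    calc N * Real.sqrt (m * n) ≤ Real.sqrt (N ^ 2) * Real.sqrt (m * n) := by
          apply mul_le_mul_of_nonneg_right _ hsmn.le
          rw [Real.sqrt_sq_eq_abs]; exact le_abs_self N
      _ = Real.sqrt (N ^ 2 * (m * n)) := (Real.sqrt_mul (sq_nonneg N) _).symm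
      _ ≤ Real.sqrt ((m - p.1 + p.2) * (n + p.1 - p.2)) := by
          apply Real.sqrt_le_sqrt
          exact key_ineq m n p.1 p.2 hm0 hn0 h1 h2 h3 h4
      _ = 1 * Real.sqrt ((m - p.1 + p.2) * (n + p.1 - p.2)) := (one_mul _).symm
  · intro p hp
    obtain ⟨h1, h2, h3, h4, hD⟩ := hp
    simp only [Set.mem_setOf_eq]
    rw [hfmn]
    simp only [f]
    have hsD : 0 < Real.sqrt ((m - p.1 + p.2) * (n + p.1 - p.2)) := Real.sqrt_pos.2 hD
    rw [← neg_div, div_le_div_iff₀ hsmn hsD]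
    set N := 1 - p.1 / m - p.2 / n with hN
    have key : -N * Real.sqrt (m * n) ≤ Real.sqrt ((m - p.1 + p.2) * (n + p.1 - p.2)) := by
      calc -N * Real.sqrt (m * n) ≤ Real.sqrt (N ^ 2) * Real.sqrt (m * n) := by
            apply mul_le_mul_of_nonneg_right _ hsmn.le
            rw [Real.sqrt_sq_eq_abs]; exact neg_le_abs N
        _ = Real.sqrt (N ^ 2 * (m * n)) := (Real.sqrt_mul (sq_nonneg N) _).symm
        _ ≤ Real.sqrt ((m - p.1 + p.2) * (n + p.1 - p.2)) := by
            apply Real.sqrt_le_sqrt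
            exact key_ineq m n p.1 p.2 hm0 hn0 h1 h2 h3 h4
    nlinarith [key]
end

section
/- Under the two-community SBM with connectivity matrix P = [[P₁₁,P₁₂],[P₂₁,P₂₂]], true community sizes m and n, and a labeling x misplacing Δ₁ nodes of community 1 and Δ₂ nodes of community 2, the expected centered difference statistic equals E₂[R_d(x) − μ_d(x)] = (mn/(m+n))·(2(m−1)P₁₁ − 2(n−1)P₂₂ − (m−n)(P₁₂+P₂₁))·(1 − Δ₁/m − Δ₂/n). -/
theorem stmt_10 (m n Δ₁ Δ₂ P₁₁ P₁₂ P₂₁ P₂₂ : ℝ) (hm : 0 < m) (hn : 0 < n) :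
    ((m - Δ₁) * (m - Δ₁ - 1) * P₁₁ + (m - Δ₁) * Δ₂ * (P₁₂ + P₂₁) + Δ₂ * (Δ₂ - 1) * P₂₂)
      - ((n - Δ₂) * (n - Δ₂ - 1) * P₂₂ + (n - Δ₂) * Δ₁ * (P₁₂ + P₂₁) + Δ₁ * (Δ₁ - 1) * P₁₁)
      - ((m - n) - 2 * (Δ₁ - Δ₂)) / (m + n) *
          (m * (m - 1) * P₁₁ + m * n * (P₁₂ + P₂₁) + n * (n - 1) * P₂₂)
    = m * n / (m + n) *
        (2 * (m - 1) * P₁₁ - 2 * (n - 1) * P₂₂ - (m - n) * (P₁₂ + P₂₁)) *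
        (1 - Δ₁ / m - Δ₂ / n) := by
  have h : m + n ≠ 0 := by positivity
  field_simp
  ring
end

section
/- Under the two-community SBM with true community sizes m and n and misplacement counts Δ₁, Δ₂, the expected centered weighted statistic equals E₂[R_w(x) − μ_w(x)] = (mn(m−1)(n−1)/((N−1)(N−2)))·(P₁₁ + P₂₂ − P₁₂ − P₂₁)·(1 + Δ₁²/(m(m−1)) + Δ₂²/(n(n−1)) − (2m−1)Δ₁/(m(m−1)) − (2n−1)Δ₂/(n(n−1)) + 2Δ₁Δ₂/(mn)). -/
theorem stmt_11 (m n Δ₁ Δ₂ P₁₁ P₁₂ P₂₁ P₂₂ : ℝ) (hm : 2 ≤ m) (hn : 2 ≤ n) :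
    let N := m + n
    let mx := m - Δ₁ + Δ₂
    let nx := n - Δ₂ + Δ₁
    ((nx - 1) / (N - 2)) *
        ((m - Δ₁) * (m - Δ₁ - 1) * P₁₁ + (m - Δ₁) * Δ₂ * (P₁₂ + P₂₁) + Δ₂ * (Δ₂ - 1) * P₂₂)
      + ((mx - 1) / (N - 2)) *
        ((n - Δ₂) * (n - Δ₂ - 1) * P₂₂ + (n - Δ₂) * Δ₁ * (P₁₂ + P₂₁) + Δ₁ * (Δ₁ - 1) * P₁₁)
      - ((mx - 1) * (nx - 1) / ((N - 1) * (N - 2))) *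
          (m * (m - 1) * P₁₁ + m * n * (P₁₂ + P₂₁) + n * (n - 1) * P₂₂)
    = (m * n * (m - 1) * (n - 1) / ((N - 1) * (N - 2))) *
        (P₁₁ + P₂₂ - P₁₂ - P₂₁) *
        (1 + Δ₁ ^ 2 / (m * (m - 1)) + Δ₂ ^ 2 / (n * (n - 1))
          - (2 * m - 1) * Δ₁ / (m * (m - 1)) - (2 * n - 1) * Δ₂ / (n * (n - 1))
          + 2 * Δ₁ * Δ₂ / (m * n)) := by
  intro N mx nx
  have h1 : N - 1 ≠ 0 := by unfold N; nlinarith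
  have h2 : N - 2 ≠ 0 := by unfold N; nlinarith
  have hm0 : m ≠ 0 := by nlinarith
  have hm1 : m - 1 ≠ 0 := by nlinarith
  have hn0 : n ≠ 0 := by nlinarith
  have hn1 : n - 1 ≠ 0 := by nlinarith
  unfold mx nx
  field_simp
  ring
end

section
/- Suppose P₁₁ + P₂₂ − P₁₂ − P₂₁ > 0 and m, n ≥ 2. Then the expected centered weighted statistic E₂[R_w(x) − μ_w(x)] over all labelings x (parametrized by misplacement counts Δ₁ ∈ {0,…,m}, Δ₂ ∈ {0,…,n}) is maximized exactly when (Δ₁,Δ₂) = (0,0) or (Δ₁,Δ₂) = (m,n), i.e., at the true labeling or its complement. -/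
set_option maxHeartbeats 1600000
set_option linter.all false


private lemma stmt_12_aux (m n a b : ℝ) (hm : 0 < m) (hm1 : 0 < m - 1)
    (hn : 0 < n) (hn1 : 0 < n - 1) :
    1 + a ^ 2 / (m * (m - 1)) + b ^ 2 / (n * (n - 1))
      - (2 * m - 1) * a / (m * (m - 1)) - (2 * n - 1) * b / (n * (n - 1))
      + 2 * a * b / (m * n)
    = 1 - (n * (n - 1) * (a * (m - a)) + m * (m - 1) * (b * (n - b))
        + (m - 1) * (n - 1) * (a * (n - b) + b * (m - a))) / (m * (m - 1) * (n * (n - 1))) := by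
  field_simp
  ring


theorem stmt_12 (m n : ℕ) (hm : 2 ≤ m) (hn : 2 ≤ n) (P₁₁ P₁₂ P₂₁ P₂₂ : ℝ)
    (hP : 0 < P₁₁ + P₂₂ - P₁₂ - P₂₁) :
    let F : ℕ → ℕ → ℝ := fun Δ₁ Δ₂ =>
      ((m : ℝ) * n * ((m : ℝ) - 1) * ((n : ℝ) - 1) /
          (((m : ℝ) + n - 1) * ((m : ℝ) + n - 2))) *
        (P₁₁ + P₂₂ - P₁₂ - P₂₁) *
        (1 + (Δ₁ : ℝ) ^ 2 / ((m : ℝ) * ((m : ℝ) - 1)) + (Δ₂ : ℝ) ^ 2 / ((n : ℝ) * ((n : ℝ) - 1))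
          - (2 * (m : ℝ) - 1) * (Δ₁ : ℝ) / ((m : ℝ) * ((m : ℝ) - 1))
          - (2 * (n : ℝ) - 1) * (Δ₂ : ℝ) / ((n : ℝ) * ((n : ℝ) - 1))
          + 2 * (Δ₁ : ℝ) * (Δ₂ : ℝ) / ((m : ℝ) * (n : ℝ)))
    ∀ Δ₁ Δ₂ : ℕ, Δ₁ ≤ m → Δ₂ ≤ n →
      F Δ₁ Δ₂ ≤ F 0 0 ∧ (F Δ₁ Δ₂ = F 0 0 ↔ (Δ₁ = 0 ∧ Δ₂ = 0) ∨ (Δ₁ = m ∧ Δ₂ = n)) := by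
  intro F Δ₁ Δ₂ h₁ h₂
  have hm' : (2:ℝ) ≤ (m:ℝ) := by exact_mod_cast hm
  have hn' : (2:ℝ) ≤ (n:ℝ) := by exact_mod_cast hn
  have hm0 : (0:ℝ) < (m:ℝ) := by linarith
  have hn0 : (0:ℝ) < (n:ℝ) := by linarith
  have hm1 : (0:ℝ) < (m:ℝ) - 1 := by linarith
  have hn1 : (0:ℝ) < (n:ℝ) - 1 := by linarith
  have hd1 : (0:ℝ) < (m:ℝ) + n - 1 := by linarith
  have hd2 : (0:ℝ) < (m:ℝ) + n - 2 := by linarith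
  set a : ℝ := (Δ₁ : ℝ) with ha
  set b : ℝ := (Δ₂ : ℝ) with hb
  have ha0 : 0 ≤ a := Nat.cast_nonneg _
  have hb0 : 0 ≤ b := Nat.cast_nonneg _
  have ham : a ≤ (m:ℝ) := by rw [ha]; exact_mod_cast h₁
  have hbn : b ≤ (n:ℝ) := by rw [hb]; exact_mod_cast h₂
  -- positive prefactor
  set D : ℝ := ((m : ℝ) * n * ((m : ℝ) - 1) * ((n : ℝ) - 1) /
          (((m : ℝ) + n - 1) * ((m : ℝ) + n - 2))) * (P₁₁ + P₂₂ - P₁₂ - P₂₁) with hD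
  have hDpos : 0 < D := by
    apply mul_pos _ hP
    exact div_pos (by positivity) (by positivity)
  set T : ℝ := (n:ℝ)*((n:ℝ)-1)*(a*((m:ℝ)-a)) + (m:ℝ)*((m:ℝ)-1)*(b*((n:ℝ)-b))
      + ((m:ℝ)-1)*((n:ℝ)-1)*(a*((n:ℝ)-b) + b*((m:ℝ)-a)) with hT
  set X := F Δ₁ Δ₂ with hX
  set Y := F 0 0 with hY
  have key : X = Y - D / ((m:ℝ)*((m:ℝ)-1)*((n:ℝ)*((n:ℝ)-1))) * T := by
    rw [hX, hY]
    show D * _ = D * _ - _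
    rw [stmt_12_aux (m:ℝ) (n:ℝ) a b hm0 hm1 hn0 hn1, hT]
    rw [Nat.cast_zero]
    rw [stmt_12_aux (m:ℝ) (n:ℝ) 0 0 hm0 hm1 hn0 hn1]
    ring
  have hcoef : 0 < D / ((m:ℝ)*((m:ℝ)-1)*((n:ℝ)*((n:ℝ)-1))) := by positivity
  have ht1 : 0 ≤ a*((m:ℝ)-a) := mul_nonneg ha0 (by linarith)
  have ht2 : 0 ≤ b*((n:ℝ)-b) := mul_nonneg hb0 (by linarith)
  have ht3 : 0 ≤ a*((n:ℝ)-b) + b*((m:ℝ)-a) := by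
    have := mul_nonneg ha0 (by linarith : (0:ℝ) ≤ (n:ℝ)-b)
    have := mul_nonneg hb0 (by linarith : (0:ℝ) ≤ (m:ℝ)-a)
    linarith
  have hTnn : 0 ≤ T := by
    rw [hT]
    have := mul_nonneg (le_of_lt (mul_pos hn0 hn1)) ht1
    have := mul_nonneg (le_of_lt (mul_pos hm0 hm1)) ht2
    have := mul_nonneg (le_of_lt (mul_pos hm1 hn1)) ht3
    linarith
  have hCT : 0 ≤ D / ((m:ℝ)*((m:ℝ)-1)*((n:ℝ)*((n:ℝ)-1))) * T :=
    mul_nonneg hcoef.le hTnn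
  constructor
  · linarith [key, hCT]
  · constructor
    · intro h
      have hT0 : T = 0 := by
        have hmul : D / ((m:ℝ)*((m:ℝ)-1)*((n:ℝ)*((n:ℝ)-1))) * T = 0 := by
          linarith [key, h]
        rcases mul_eq_zero.mp hmul with h' | h'
        · exact absurd h' (ne_of_gt hcoef)
        · exact h'
      -- each nonneg summand is zero
      have q1nn : 0 ≤ (n:ℝ)*((n:ℝ)-1)*(a*((m:ℝ)-a)) :=
        mul_nonneg (le_of_lt (mul_pos hn0 hn1)) ht1
      have q2nn : 0 ≤ (m:ℝ)*((m:ℝ)-1)*(b*((n:ℝ)-b)) :=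
        mul_nonneg (le_of_lt (mul_pos hm0 hm1)) ht2
      have q3nn : 0 ≤ ((m:ℝ)-1)*((n:ℝ)-1)*(a*((n:ℝ)-b) + b*((m:ℝ)-a)) :=
        mul_nonneg (le_of_lt (mul_pos hm1 hn1)) ht3
      have q1 : (n:ℝ)*((n:ℝ)-1)*(a*((m:ℝ)-a)) = 0 := by linarith [hT, hT0]
      have q2 : (m:ℝ)*((m:ℝ)-1)*(b*((n:ℝ)-b)) = 0 := by linarith [hT, hT0]
      have q3 : ((m:ℝ)-1)*((n:ℝ)-1)*(a*((n:ℝ)-b) + b*((m:ℝ)-a)) = 0 := by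
        linarith [hT, hT0]
      have hz1 : a*((m:ℝ)-a) = 0 := by
        rcases mul_eq_zero.mp q1 with h' | h'
        · exact absurd h' (ne_of_gt (mul_pos hn0 hn1))
        · exact h'
      have hz2 : b*((n:ℝ)-b) = 0 := by
        rcases mul_eq_zero.mp q2 with h' | h'
        · exact absurd h' (ne_of_gt (mul_pos hm0 hm1))
        · exact h'
      have hz3 : a*((n:ℝ)-b) + b*((m:ℝ)-a) = 0 := by
        rcases mul_eq_zero.mp q3 with h' | h'
        · exact absurd h' (ne_of_gt (mul_pos hm1 hn1))
        · exact h'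
      have ha' : a = 0 ∨ a = (m:ℝ) := by
        rcases mul_eq_zero.mp hz1 with h' | h'
        · exact Or.inl h'
        · exact Or.inr (by linarith)
      have hb' : b = 0 ∨ b = (n:ℝ) := by
        rcases mul_eq_zero.mp hz2 with h' | h'
        · exact Or.inl h'
        · exact Or.inr (by linarith)
      rcases ha' with hA | hA <;> rcases hb' with hB | hB
      · exact Or.inl ⟨by exact_mod_cast ha ▸ hA, by exact_mod_cast hb ▸ hB⟩
      · exfalso; rw [hA, hB] at hz3; nlinarith
      · exfalso; rw [hA, hB] at hz3; nlinarith
      · exact Or.inr ⟨by exact_mod_cast ha ▸ hA, by exact_mod_cast hb ▸ hB⟩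
    · intro h
      have hT0 : T = 0 := by
        rcases h with ⟨h1, h2⟩ | ⟨h1, h2⟩ <;>
          · rw [hT, ha, hb, h1, h2]; push_cast; ring
      have hz : D / ((m:ℝ)*((m:ℝ)-1)*((n:ℝ)*((n:ℝ)-1))) * T = 0 := by
        rw [hT0]; ring
      linarith [key, hz]
end

section
/- For integers m, n ≥ 2, the quadratic g(Δ₁,Δ₂) = 1 + Δ₁²/(m(m−1)) + Δ₂²/(n(n−1)) − (2m−1)Δ₁/(m(m−1)) − (2n−1)Δ₂/(n(n−1)) + 2Δ₁Δ₂/(mn) satisfies g(0,0) = g(m,n) = 1 and g(Δ₁,Δ₂) ≤ 1 for all integer (Δ₁,Δ₂) ∈ [0,m] × [0,n]. -/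
theorem stmt_13 (m n : ℕ) (hm : 2 ≤ m) (hn : 2 ≤ n) :
    let g : ℕ → ℕ → ℝ := fun Δ₁ Δ₂ =>
      1 + (Δ₁ : ℝ) ^ 2 / ((m : ℝ) * ((m : ℝ) - 1)) + (Δ₂ : ℝ) ^ 2 / ((n : ℝ) * ((n : ℝ) - 1))
        - (2 * (m : ℝ) - 1) * (Δ₁ : ℝ) / ((m : ℝ) * ((m : ℝ) - 1))
        - (2 * (n : ℝ) - 1) * (Δ₂ : ℝ) / ((n : ℝ) * ((n : ℝ) - 1))
        + 2 * (Δ₁ : ℝ) * (Δ₂ : ℝ) / ((m : ℝ) * (n : ℝ))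
    g 0 0 = 1 ∧ g m n = 1 ∧ ∀ Δ₁ Δ₂ : ℕ, Δ₁ ≤ m → Δ₂ ≤ n → g Δ₁ Δ₂ ≤ 1 := by
  intro g
  have hm2 : (2 : ℝ) ≤ (m : ℝ) := by exact_mod_cast hm
  have hn2 : (2 : ℝ) ≤ (n : ℝ) := by exact_mod_cast hn
  have hm0 : (0 : ℝ) < (m : ℝ) := by linarith
  have hm1 : (0 : ℝ) < (m : ℝ) - 1 := by linarith
  have hn0 : (0 : ℝ) < (n : ℝ) := by linarith
  have hn1 : (0 : ℝ) < (n : ℝ) - 1 := by linarith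
  have hmm : ((m : ℝ) * ((m : ℝ) - 1)) ≠ 0 := by positivity
  have hnn : ((n : ℝ) * ((n : ℝ) - 1)) ≠ 0 := by positivity
  have hmn : ((m : ℝ) * (n : ℝ)) ≠ 0 := by positivity
  refine ⟨by simp [g], ?_, ?_⟩
  · show (1 : ℝ) + _ + _ - _ - _ + _ = 1
    field_simp
    ring
  · intro a b ha hb
    have haR : (a : ℝ) ≤ (m : ℝ) := by exact_mod_cast ha
    have hbR : (b : ℝ) ≤ (n : ℝ) := by exact_mod_cast hb
    have ha0 : (0 : ℝ) ≤ (a : ℝ) := by positivity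
    have hb0 : (0 : ℝ) ≤ (b : ℝ) := by positivity
    set A := (a : ℝ)
    set B := (b : ℝ)
    have hF : (0 : ℝ) ≤ (n : ℝ) * ((n : ℝ) - 1) * (A * ((m : ℝ) - A))
        + (m : ℝ) * ((m : ℝ) - 1) * (B * ((n : ℝ) - B))
        + ((m : ℝ) - 1) * ((n : ℝ) - 1) * (A * ((n : ℝ) - B) + B * ((m : ℝ) - A)) := by
      have h1 : (0 : ℝ) ≤ A * ((m : ℝ) - A) := by nlinarith
      have h2 : (0 : ℝ) ≤ B * ((n : ℝ) - B) := by nlinarith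
      have h3 : (0 : ℝ) ≤ A * ((n : ℝ) - B) := by nlinarith
      have h4 : (0 : ℝ) ≤ B * ((m : ℝ) - A) := by nlinarith
      have := mul_nonneg (le_of_lt (mul_pos hn0 hn1)) h1
      have := mul_nonneg (le_of_lt (mul_pos hm0 hm1)) h2
      have := mul_nonneg (le_of_lt (mul_pos hm1 hn1)) (add_nonneg h3 h4)
      linarith
    have key : g a b - 1 = -((n : ℝ) * ((n : ℝ) - 1) * (A * ((m : ℝ) - A))
        + (m : ℝ) * ((m : ℝ) - 1) * (B * ((n : ℝ) - B))
        + ((m : ℝ) - 1) * ((n : ℝ) - 1) * (A * ((n : ℝ) - B) + B * ((m : ℝ) - A)))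
        / ((m : ℝ) * ((m : ℝ) - 1) * ((n : ℝ) * ((n : ℝ) - 1))) := by
      show (1 : ℝ) + _ + _ - _ - _ + _ - 1 = _
      field_simp
      ring
    have hd : (0 : ℝ) < (m : ℝ) * ((m : ℝ) - 1) * ((n : ℝ) * ((n : ℝ) - 1)) := by positivity
    have : g a b - 1 ≤ 0 := by
      rw [key]
      exact div_nonpos_of_nonpos_of_nonneg (by linarith) (le_of_lt hd)
    linarith
end
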